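/- The centralizer of the derivation x·∂/∂x + ∂/∂y inside the space of derivations of the form (a·x + H(y))·∂/∂x + b·∂/∂y of the ring ℂ[x,y][e^y] (where H ranges over polynomials in y times powers of e^y) is spanned by x·∂/∂x, ∂/∂y, and e^y·∂/∂x. -/

import Mathlib

open MvPolynomial

noncomputable section

/-- The ring `ℂ[x,y,t]`, where `t` plays the role of `e^y` (so `∂/∂y` sends `t ↦ t`):
`x = X 0`, `y = X 1`, `t = X 2`. -/
abbrev R3 : Type := MvPolynomial (Fin 3) ℂ

/-- The Lie algebra of derivations of `ℂ[x,y,t]`. -/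
abbrev Der3 : Type := Derivation ℂ R3 R3

def Xv : R3 := X 0
def Yv : R3 := X 1
/-- `t`, behaving as `e^y`. -/
def Tv : R3 := X 2

/-- The derivation with `x ↦ p`, `y ↦ q`, `t ↦ r`. -/
def vf3 (p q r : R3) : Der3 := MvPolynomial.mkDerivation ℂ ![p, q, r]

/-- Derivations of the form `(a·x + H(y,e^y))·∂/∂x + b·∂/∂y` (so `t = e^y` goes to `b·t`). -/
def S : Set Der3 :=
  {E | ∃ a b : ℂ, ∃ H ∈ Algebra.adjoin ℂ ({Yv, Tv} : Set R3),
    E = vf3 (C a * Xv + H) (C b) (C b * Tv)}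

/-!
Write `D = x ∂ₓ + ∂_y + t ∂_t`. For `E = (a x + H) ∂ₓ + b ∂_y` (with `t ↦ b t`) the bracket
`⁅E, D⁆` kills `y` and `t` and sends `x` to `H - D H`, so `E` commutes with `D` iff `D H = H`.
Since `D (x^i y^j t^k) = (i + k) x^i y^j t^k + j x^i y^(j-1) t^k`, comparing coefficients gives
`(i + k - 1) c_{i,j,k} + (j + 1) c_{i,j+1,k} = 0`. For `i + k ≠ 1` this expresses `c_{i,j,k}`
through `c_{i,j+1,k}`, and descending from large `j` all these coefficients vanish; for
`i + k = 1` it forces `c_{i,j,k} = 0` when `j ≥ 1`. So the fixed points of `D` are the linear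
combinations of `x` and `t`, and `H ∈ ℂ[y, t]` leaves only `t`.
-/

namespace MvPolynomial

variable {R σ : Type*} [CommSemiring R]

theorem coeff_X_mul_pderiv (i : σ) (p : MvPolynomial σ R) (m : σ →₀ ℕ) :
    coeff m (X i * pderiv i p) = m i * coeff m p := by
  classical
  rw [coeff_X_mul']
  split_ifs with hi
  · have hle : Finsupp.single i 1 ≤ m := Finsupp.single_le_iff.2 (Nat.one_le_iff_ne_zero.2
      (Finsupp.mem_support_iff.1 hi))
    rw [coeff_pderiv, tsub_add_cancel_of_le hle, Finsupp.tsub_apply, Finsupp.single_eq_same,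
      mul_comm]
    congr 1
    rw [← Nat.cast_add_one, Nat.sub_add_cancel (Finsupp.single_le_iff.1 hle)]
  · simp [Finsupp.notMem_support_iff.1 hi]

theorem coeff_eq_zero_of_forall_coeff_add_single (p : MvPolynomial σ R) (m : σ →₀ ℕ) (i : σ)
    (h : ∀ k, coeff (m + Finsupp.single i (k + 1)) p = 0 → coeff (m + Finsupp.single i k) p = 0) :
    coeff m p = 0 := by
  have high : ∀ n k, p.totalDegree < k + n → coeff (m + Finsupp.single i k) p = 0 := by
    intro n
    induction n with
    | zero =>
      intro k hk
      refine coeff_eq_zero_of_totalDegree_lt ?_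
      rw [← Finsupp.degree_apply, map_add, Finsupp.degree_single]
      omega
    | succ n ih => exact fun k hk => h k (ih (k + 1) (by omega))
  simpa using high (p.totalDegree + 1) 0 (by omega)

end MvPolynomial

@[simp]
lemma vf3_apply_X (p q r : R3) (i : Fin 3) : vf3 p q r (X i) = ![p, q, r] i :=
  mkDerivation_X ℂ _ i

lemma vf3_apply (p q r f : R3) :
    vf3 p q r f = p * pderiv 0 f + q * pderiv 1 f + r * pderiv 2 f := by
  have h : vf3 p q r = p • pderiv 0 + q • pderiv 1 + r • pderiv 2 := by
    refine derivation_ext fun i => ?_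
    fin_cases i <;> simp [pderiv_X]
  simp [h]

lemma vf3_eq_zero_iff (p : R3) : vf3 p 0 0 = 0 ↔ p = 0 := by
  refine ⟨fun h => by simpa using congrArg (· (X 0)) h, fun h => ?_⟩
  refine derivation_ext fun i => ?_
  fin_cases i <;> simp [h]

lemma coeff_vf3_Xv_one_Tv (H : R3) (m : Fin 3 →₀ ℕ) :
    coeff m (vf3 Xv 1 Tv H) =
      (m 0 + m 2) * coeff m H + (m 1 + 1) * coeff (m + Finsupp.single 1 1) H := by
  rw [vf3_apply, coeff_add, coeff_add, one_mul, Xv, Tv, coeff_X_mul_pderiv, coeff_X_mul_pderiv,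
    coeff_pderiv]
  ring

lemma coeff_relation_of_vf3_Xv_one_Tv_eq_self {H : R3} (hH : vf3 Xv 1 Tv H = H)
    (m : Fin 3 →₀ ℕ) :
    ((m 0 + m 2 : ℂ) - 1) * coeff m H + (m 1 + 1) * coeff (m + Finsupp.single 1 1) H = 0 := by
  linear_combination congrArg (coeff m) hH - coeff_vf3_Xv_one_Tv H m

lemma coeff_eq_zero_of_vf3_Xv_one_Tv_eq_self {H : R3} (hH : vf3 Xv 1 Tv H = H) {m : Fin 3 →₀ ℕ}
    (h0 : m ≠ Finsupp.single 0 1) (h2 : m ≠ Finsupp.single 2 1) : coeff m H = 0 := by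
  by_cases hm : m 0 + m 2 = 1
  · obtain h1 | h1 := eq_or_ne (m 1) 0
    · exfalso
      rcases Nat.add_eq_one_iff.1 hm with ⟨hm0, hm2⟩ | ⟨hm0, hm2⟩
      · exact h2 (by ext i; fin_cases i <;> simp [hm0, h1, hm2])
      · exact h0 (by ext i; fin_cases i <;> simp [hm0, h1, hm2])
    · have hle : Finsupp.single 1 1 ≤ m := Finsupp.single_le_iff.2 (Nat.one_le_iff_ne_zero.2 h1)
      have key := coeff_relation_of_vf3_Xv_one_Tv_eq_self hH (m - Finsupp.single 1 1)
      set m' : Fin 3 →₀ ℕ := m - Finsupp.single 1 1 with hm'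
      have hdeg : (m' 0 : ℂ) + m' 2 - 1 = 0 := by
        have : m' 0 + m' 2 = 1 := by simpa [hm'] using hm
        rw [sub_eq_zero]
        exact_mod_cast this
      rw [hdeg, zero_mul, zero_add, tsub_add_cancel_of_le hle] at key
      exact (mul_eq_zero.1 key).resolve_left (Nat.cast_add_one_ne_zero _)
  · refine coeff_eq_zero_of_forall_coeff_add_single H m 1 fun k hk => ?_
    have key := coeff_relation_of_vf3_Xv_one_Tv_eq_self hH (m + Finsupp.single 1 k)
    rw [add_assoc, ← Finsupp.single_add, hk, mul_zero, add_zero] at key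
    refine (mul_eq_zero.1 key).resolve_left ?_
    simpa [sub_eq_zero] using mod_cast hm

lemma vf3_Xv_one_Tv_eq_self_iff (H : R3) :
    vf3 Xv 1 Tv H = H ↔ ∃ a c : ℂ, H = C a * Xv + C c * Tv := by
  refine ⟨fun hH => ⟨coeff (Finsupp.single 0 1) H, coeff (Finsupp.single 2 1) H, ?_⟩, ?_⟩
  · ext m
    rw [coeff_add, coeff_C_mul, coeff_C_mul, Xv, Tv, coeff_X, coeff_X]
    by_cases h0 : m = Finsupp.single 0 1
    · subst h0
      simp [Finsupp.single_left_inj]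
    by_cases h2 : m = Finsupp.single 2 1
    · subst h2
      simp [Finsupp.single_left_inj]
    rw [if_neg (Ne.symm h0), if_neg (Ne.symm h2), mul_zero, mul_zero, add_zero]
    exact coeff_eq_zero_of_vf3_Xv_one_Tv_eq_self hH h0 h2
  · rintro ⟨a, c, rfl⟩
    simp [vf3_apply, Xv, Tv, pderiv_X, mul_comm]

lemma pderiv_zero_eq_zero_of_mem_adjoin {H : R3} (hH : H ∈ Algebra.adjoin ℂ {Yv, Tv}) :
    pderiv 0 H = 0 := by
  induction hH using Algebra.adjoin_induction with
  | mem p hp =>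
    rcases hp with rfl | rfl <;> simp [Yv, Tv, pderiv_X]
  | algebraMap r => simp [algebraMap_eq]
  | add p q _ _ hp hq => simp [hp, hq]
  | mul p q _ _ hp hq => simp [hp, hq]

lemma lie_vf3_Xv_one_Tv (a b : ℂ) (H : R3) :
    ⁅vf3 (C a * Xv + H) (C b) (C b * Tv), vf3 Xv 1 Tv⁆ = vf3 (H - vf3 Xv 1 Tv H) 0 0 := by
  refine derivation_ext fun i => ?_
  rw [Derivation.commutator_apply]
  fin_cases i <;> simp [Xv, Tv]

lemma smul_vf3_add_smul_vf3_add_smul_vf3 (a b c : ℂ) :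
    a • vf3 Xv 0 0 + b • vf3 0 1 Tv + c • vf3 Tv 0 0 =
      vf3 (C a * Xv + C c * Tv) (C b) (C b * Tv) := by
  refine derivation_ext fun i => ?_
  fin_cases i <;> simp [smul_eq_C_mul]

lemma mem_S_and_lie_eq_zero_iff (E : Der3) :
    E ∈ S ∧ ⁅E, vf3 Xv 1 Tv⁆ = 0 ↔ ∃ a b c : ℂ, E = vf3 (C a * Xv + C c * Tv) (C b) (C b * Tv) := by
  constructor
  · rintro ⟨⟨a, b, H, hH, rfl⟩, hlie⟩
    rw [lie_vf3_Xv_one_Tv, vf3_eq_zero_iff, sub_eq_zero, eq_comm,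
      vf3_Xv_one_Tv_eq_self_iff] at hlie
    obtain ⟨a', c, rfl⟩ := hlie
    have ha' : a' = 0 := by
      simpa [Xv, Tv, pderiv_X] using pderiv_zero_eq_zero_of_mem_adjoin hH
    exact ⟨a, b, c, by simp [ha']⟩
  · rintro ⟨a, b, c, rfl⟩
    have hT : C c * Tv ∈ Algebra.adjoin ℂ ({Yv, Tv} : Set R3) :=
      Subalgebra.mul_mem _ (Subalgebra.algebraMap_mem _ c) (Algebra.subset_adjoin (by simp))
    refine ⟨⟨a, b, C c * Tv, hT, rfl⟩, ?_⟩
    rw [lie_vf3_Xv_one_Tv, vf3_eq_zero_iff, sub_eq_zero, eq_comm, vf3_Xv_one_Tv_eq_self_iff]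
    exact ⟨0, c, by simp⟩

/-- the centralizer of `x·∂/∂x + ∂/∂y` in the space of derivations of the
form `(a·x + H)·∂/∂x + b·∂/∂y` is spanned by `x·∂/∂x`, `∂/∂y` and `e^y·∂/∂x`. -/
theorem stmt15 :
    {E ∈ S | ⁅E, vf3 Xv 1 Tv⁆ = 0} =
      (Submodule.span ℂ ({vf3 Xv 0 0, vf3 0 1 Tv, vf3 Tv 0 0} : Set Der3) : Set Der3) := by
  ext E
  rw [Set.mem_ofPred_eq, mem_S_and_lie_eq_zero_iff, SetLike.mem_coe, Submodule.mem_span_triple]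
  simp_rw [smul_vf3_add_smul_vf3_add_smul_vf3, eq_comm]
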